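/- arXiv:2109.08572 — 2 statements merged into one kernel-verified Lean document; each statement's English description precedes it below -/
import Mathlib

section
/- Let P be a point set of PG(N',q^{k+1}) with N+1 = (N'+1)(k+1), and suppose P is not contained in any F_q-linear set of rank at most N−k. Then the image of P under the field reduction map F_{N'+1,k+1,q} : PG(N',q^{k+1}) → PG(N,q) is a higgledy-piggledy set of pairwise disjoint k-subspaces in PG(N,q). -/
open Module

namespace HP

variable (F : Type*) [Field F] (V : Type*) [AddCommGroup V] [Module F V]

/-- The set of points of the projective space `PG(V)` lying in a linear subspace `W`.
A projective point lies in `W` iff its representing one-dimensional subspace is below `W`. -/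
def ptsIn (W : Submodule F V) : Set (Projectivization F V) := {P | P.submodule ≤ W}

/-- The linear span of a set of projective points. -/
noncomputable def spanPts (S : Set (Projectivization F V)) : Submodule F V :=
  ⨆ P ∈ S, P.submodule

/-- `S` is a strong `k`-blocking set of an ambient projective space of projective
dimension `N`: every `(N-k)`-dimensional projective subspace `W` (i.e. linear subspace of
rank `N-k+1`) is spanned by its intersection with `S`. -/
def StrongBlock (N k : ℕ) (S : Set (Projectivization F V)) : Prop :=
  ∀ W : Submodule F V, finrank F W = N - k + 1 →
    spanPts F V (S ∩ ptsIn F V W) = W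

end HP

open HP

/-!
Restriction of scalars turns each point of `PG(N', q^(k+1))` into a `(k+1)`-dimensional
`F`-subspace, and distinct points, being atoms of the `F'`-subspace lattice, give disjoint ones.
For the blocking property let `W` have rank `N - k + 1` and let `U ≤ W` be the span of the points
of the reduced spread elements lying in `W`. Every reduced element `E` meets `W`, by dimension
count, and `E ⊓ W ≤ U`. So if `U ≠ W`, then `U` has rank at most `N - k` and meets every reduced
element, which is exactly what the hypothesis excludes.
-/

open scoped LinearAlgebra.Projectivization

theorem Submodule.finrank_restrictScalars {F F' V : Type*} [Field F] [Field F'] [Algebra F F']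
    [AddCommGroup V] [Module F V] [Module F' V] [IsScalarTower F F' V] (p : Submodule F' V) :
    finrank F (p.restrictScalars F) = finrank F F' * finrank F' p := by
  rw [← Module.finrank_mul_finrank F F' (p.restrictScalars F),
    (p.restrictScalarsEquiv F F' V).finrank_eq]

namespace Projectivization

theorem finrank_restrictScalars_submodule {F F' V : Type*} [Field F] [Field F'] [Algebra F F']
    [AddCommGroup V] [Module F V] [Module F' V] [IsScalarTower F F' V] (P : ℙ F' V) :
    finrank F (P.submodule.restrictScalars F) = finrank F F' := by
  rw [Submodule.finrank_restrictScalars, P.finrank_submodule, mul_one]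

theorem submodule_inf_eq_bot_of_ne {K V : Type*} [DivisionRing K] [AddCommGroup V] [Module K V]
    {P Q : ℙ K V} (h : P ≠ Q) : P.submodule ⊓ Q.submodule = ⊥ :=
  disjoint_iff.mp <| (Submodule.isAtom_iff_finrank_eq_one.mpr P.finrank_submodule).disjoint_of_ne
    (Submodule.isAtom_iff_finrank_eq_one.mpr Q.finrank_submodule) (submodule_injective.ne h)

end Projectivization

namespace HP

variable {F V : Type*} [Field F] [AddCommGroup V] [Module F V]

theorem spanPts_le {S : Set (ℙ F V)} {W : Submodule F V} (h : S ⊆ ptsIn F V W) :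
    spanPts F V S ≤ W :=
  iSup₂_le h

theorem submodule_le_spanPts {S : Set (ℙ F V)} {P : ℙ F V} (hP : P ∈ S) :
    P.submodule ≤ spanPts F V S :=
  le_iSup₂ (f := fun P _ => P.submodule) P hP

theorem inf_le_spanPts_inter_ptsIn {S : Set (ℙ F V)} {E W : Submodule F V}
    (hE : ptsIn F V E ⊆ S) : E ⊓ W ≤ spanPts F V (S ∩ ptsIn F V W) := by
  intro v hv
  by_cases hv0 : v = 0
  · rw [hv0]
    exact zero_mem _
  have hle : (Projectivization.mk F v hv0).submodule ≤ E ⊓ W := by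
    rwa [Projectivization.submodule_mk, Submodule.span_singleton_le_iff_mem]
  have hmem : Projectivization.mk F v hv0 ∈ S ∩ ptsIn F V W :=
    ⟨hE (hle.trans inf_le_left), hle.trans inf_le_right⟩
  refine submodule_le_spanPts hmem ?_
  rw [Projectivization.submodule_mk]
  exact Submodule.mem_span_singleton_self v

theorem strongBlock_biUnion_ptsIn {N k : ℕ} (hV : finrank F V = N + 1)
    {𝓔 : Set (Submodule F V)} (hrank : ∀ E ∈ 𝓔, finrank F E = k + 1)
    (hno : ¬ ∃ κ : Submodule F V, finrank F κ ≤ N - k ∧ ∀ E ∈ 𝓔, E ⊓ κ ≠ ⊥) :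
    StrongBlock F V N k (⋃ E ∈ 𝓔, ptsIn F V E) := by
  have : FiniteDimensional F V := Module.finite_of_finrank_eq_succ hV
  intro W hW
  set U := spanPts F V ((⋃ E ∈ 𝓔, ptsIn F V E) ∩ ptsIn F V W)
  have hUW : U ≤ W := spanPts_le Set.inter_subset_right
  by_contra hne
  have hU : finrank F U ≤ N - k := by
    have := Submodule.finrank_lt_finrank_of_lt (hUW.lt_of_ne hne)
    omega
  refine hno ⟨U, hU, fun E hE => ?_⟩
  have hEW : E ⊓ W ≠ ⊥ := fun h => by
    have := Submodule.finrank_add_finrank_le_of_disjoint (disjoint_iff.mpr h)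
    rw [hrank E hE, hW, hV] at this
    omega
  exact ne_bot_of_le_ne_bot hEW
    (le_inf inf_le_left (inf_le_spanPts_inter_ptsIn (Set.subset_biUnion_of_mem hE)))

end HP

theorem stmt_10_general (F F' : Type*) [Field F] [Field F'] [Algebra F F']
    (N N' k : ℕ) (hdeg : finrank F F' = k + 1) (hN : N + 1 = (N' + 1) * (k + 1))
    (S : Set (Projectivization F' (Fin (N' + 1) → F')))
    (hno : ¬ ∃ κ : Submodule F (Fin (N' + 1) → F'), finrank F κ ≤ N - k ∧
      ∀ P ∈ S, (Submodule.restrictScalars F P.submodule) ⊓ κ ≠ ⊥) :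
    (∀ P ∈ S, finrank F (Submodule.restrictScalars F P.submodule) = k + 1) ∧
    (∀ P ∈ S, ∀ Q ∈ S, P ≠ Q →
      (Submodule.restrictScalars F P.submodule) ⊓ (Submodule.restrictScalars F Q.submodule)
        = ⊥) ∧
    StrongBlock F (Fin (N' + 1) → F') N k
      (⋃ κ ∈ (fun P : Projectivization F' (Fin (N' + 1) → F') =>
          Submodule.restrictScalars F P.submodule) '' S,
        ptsIn F (Fin (N' + 1) → F') κ) := by
  have hrank (P : ℙ F' (Fin (N' + 1) → F')) :
      finrank F (P.submodule.restrictScalars F) = k + 1 :=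
    P.finrank_restrictScalars_submodule.trans hdeg
  have hV : finrank F (Fin (N' + 1) → F') = N + 1 := by
    rw [← Module.finrank_mul_finrank F F', hdeg, Module.finrank_fin_fun, hN, mul_comm]
  refine ⟨fun P _ => hrank P, fun P _ Q _ hPQ => ?_, strongBlock_biUnion_ptsIn hV ?_ ?_⟩
  · rw [← Submodule.restrictScalars_inf, Projectivization.submodule_inf_eq_bot_of_ne hPQ,
      Submodule.restrictScalars_bot]
  · rintro _ ⟨P, -, rfl⟩
    exact hrank P
  · simpa only [Set.forall_mem_image] using hno

/-- field reduction. View `PG(N',q^(k+1))` over a degree-`(k+1)` field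
extension `F ⊆ F'`; each point `P` yields, by restriction of scalars, a `k`-subspace
of `PG(N,q)` (with `N+1 = (N'+1)(k+1)`). If a point set `S` of `PG(N',q^(k+1))` is not
contained in any `F_q`-linear set of rank at most `N-k` (i.e. no `F`-subspace of rank
at most `N-k` meets all its reduced spread elements), then the image of `S` under field
reduction is a higgledy-piggledy set of pairwise disjoint `k`-subspaces of `PG(N,q)`. -/
theorem stmt_10 (F F' : Type*) [Field F] [Fintype F] [Field F'] [Fintype F'] [Algebra F F']
    (N N' k : ℕ) (hdeg : finrank F F' = k + 1) (hN : N + 1 = (N' + 1) * (k + 1))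
    (S : Set (Projectivization F' (Fin (N' + 1) → F')))
    (hno : ¬ ∃ κ : Submodule F (Fin (N' + 1) → F'), finrank F κ ≤ N - k ∧
      ∀ P ∈ S, (Submodule.restrictScalars F P.submodule) ⊓ κ ≠ ⊥) :
    (∀ P ∈ S, finrank F (Submodule.restrictScalars F P.submodule) = k + 1) ∧
    (∀ P ∈ S, ∀ Q ∈ S, P ≠ Q →
      (Submodule.restrictScalars F P.submodule) ⊓ (Submodule.restrictScalars F Q.submodule)
        = ⊥) ∧
    StrongBlock F (Fin (N' + 1) → F') N k
      (⋃ κ ∈ (fun P : Projectivization F' (Fin (N' + 1) → F') =>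
          Submodule.restrictScalars F P.submodule) '' S,
        ptsIn F (Fin (N' + 1) → F') κ) :=
  stmt_10_general F F' N N' k hdeg hN S hno
end

section
/- Only-if direction: Let m ≥ 1 and q > 2. If there exist three distinct F_q-sublines of PG(1,q^m) pairwise intersecting in exactly 2 points but with empty common intersection, then m is even. -/
open Module

namespace HP

variable (F F' : Type*) [Field F] [Field F'] [Algebra F F']

/-- An `F_q`-subline of the projective line `PG(1, F')` over an extension `F ⊆ F'`:
the image of the standard embedded `PG(1, F)` under an element of `PGL(2, F')`. -/
def IsSubline (b : Set (Projectivization F' (Fin 2 → F'))) : Prop :=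
  ∃ g : (Fin 2 → F') ≃ₗ[F'] (Fin 2 → F'),
    b = {P | ∃ (v : Fin 2 → F) (hv : g (fun i => algebraMap F F' (v i)) ≠ 0),
      P = Projectivization.mk F' (g (fun i => algebraMap F F' (v i))) hv}

/-- An `F_q`-linear set of `PG(1, F')`: the set of points represented by the nonzero
vectors of an `F_q`-subspace `W` of the `F`-vector space `F'^2`. -/
def IsLinearSet (S : Set (Projectivization F' (Fin 2 → F'))) : Prop :=
  ∃ W : Submodule F (Fin 2 → F'),
    S = {P | ∃ (v : Fin 2 → F') (hv : v ≠ 0), v ∈ W ∧ P = Projectivization.mk F' v hv}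

end HP

open HP

/-!
A subline is the set of points represented by the nonzero vectors of a 2-dimensional
`F`-subspace `W` of `F'²`, and `W` is the `F`-span of any two `F'`-independent vectors in it.
Taking representatives `p, q ∈ W₁` of the two points of `b₁ ∩ b₂`, we get `b₁ = ⟨p, q⟩_F` and
`b₂ = ⟨p, α q⟩_F` for some `α`, so in the affine coordinate `z ↦ [p + z q]` the points of
`b₁ ∩ b₃` are `a ≠ b` in `F` and those of `b₂ ∩ b₃` are `cα ≠ dα` outside `F`. Four points of
the subline `b₃` have cross-ratio in `F`, so `(cα - a)(dα - b) = k (cα - b)(dα - a)` with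
`k ∈ F`. For `k = 1` this forces `(a - b)(c - d) α = 0`, which is impossible; otherwise it is a
quadratic equation for `α ∉ F` over `F`, so `[F(α) : F] = 2` divides `[F' : F]`.
-/

open Projectivization Submodule Polynomial IntermediateField
open scoped LinearAlgebra.Projectivization

namespace HP

def crossRatio {K : Type*} [Field K] (z₁ z₂ z₃ z₄ : K) : K :=
  (z₃ - z₁) * (z₄ - z₂) / ((z₃ - z₂) * (z₄ - z₁))

section Quadratic

variable {F F' : Type*} [Field F] [Field F'] [Algebra F F']

theorem even_finrank_of_quadratic {α : F'} (hα : α ∉ (algebraMap F F').range) {a b c : F}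
    (ha : a ≠ 0) (h : algebraMap F F' a * α ^ 2 + algebraMap F F' b * α + algebraMap F F' c = 0) :
    Even (finrank F F') := by
  have hroot : aeval α (C a * X ^ 2 + C b * X + C c) = 0 := by simpa using h
  have hdeg : (C a * X ^ 2 + C b * X + C c).natDegree = 2 := natDegree_quadratic ha
  have hne : C a * X ^ 2 + C b * X + C c ≠ 0 := ne_zero_of_natDegree_gt (hdeg ▸ two_pos)
  have hint : IsIntegral F α := IsAlgebraic.isIntegral ⟨_, hne, hroot⟩
  have hminpoly : (minpoly F α).natDegree = 2 :=
    le_antisymm (hdeg ▸ natDegree_le_of_dvd (minpoly.dvd F α hroot) hne)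
      ((minpoly.two_le_natDegree_iff hint).2 hα)
  rw [← finrank_mul_finrank F F⟮α⟯ F', adjoin.finrank hint, hminpoly]
  exact even_two_mul _

theorem even_finrank_of_crossRatio_mem_range {α : F'} {a b c d : F} (hab : a ≠ b) (hcd : c ≠ d)
    (hc : algebraMap F F' c * α ∉ (algebraMap F F').range)
    (hd : algebraMap F F' d * α ∉ (algebraMap F F').range)
    (h : crossRatio (algebraMap F F' a) (algebraMap F F' b) (algebraMap F F' c * α)
      (algebraMap F F' d * α) ∈ (algebraMap F F').range) :
    Even (finrank F F') := by
  obtain ⟨k, hk⟩ := h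
  have hcb : algebraMap F F' c * α - algebraMap F F' b ≠ 0 :=
    fun h => hc ⟨b, (sub_eq_zero.1 h).symm⟩
  have hda : algebraMap F F' d * α - algebraMap F F' a ≠ 0 :=
    fun h => hd ⟨a, (sub_eq_zero.1 h).symm⟩
  rw [crossRatio, eq_div_iff (mul_ne_zero hcb hda)] at hk
  have hα : α ∉ (algebraMap F F').range := by
    rintro ⟨t, rfl⟩
    exact hc ⟨c * t, map_mul _ _ _⟩
  by_cases hk1 : k = 1
  · subst hk1
    have : algebraMap F F' ((a - b) * (c - d)) * α = 0 := by
      rw [map_one, one_mul] at hk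
      rw [map_mul, map_sub, map_sub]
      linear_combination -hk
    have hα0 : α = 0 := by simpa [sub_eq_zero, hab, hcd] using this
    exact (hα ⟨0, by rw [map_zero, hα0]⟩).elim
  · have hc0 : c ≠ 0 := by rintro rfl; exact hc ⟨0, by simp⟩
    have hd0 : d ≠ 0 := by rintro rfl; exact hd ⟨0, by simp⟩
    refine even_finrank_of_quadratic hα (a := (1 - k) * c * d)
      (b := k * (a * c + b * d) - (b * c + a * d)) (c := (1 - k) * a * b)
      (mul_ne_zero (mul_ne_zero (sub_ne_zero.2 (Ne.symm hk1)) hc0) hd0) ?_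
    simp only [map_mul, map_sub, map_add, map_one]
    linear_combination -hk

end Quadratic

section LinearSet

variable {F F' V : Type*} [Field F] [Field F'] [AddCommGroup V] [Module F' V]

theorem mk_smul_eq {v : V} (hv : v ≠ 0) {c : F'} (hc : c ≠ 0) :
    mk F' (c • v) (smul_ne_zero hc hv) = mk F' v hv :=
  (mk_eq_mk_iff' F' _ _ _ hv).2 ⟨c, rfl⟩

theorem linearIndependent_of_mk_ne {v w : V} {hv : v ≠ 0} {hw : w ≠ 0}
    (h : mk F' v hv ≠ mk F' w hw) : LinearIndependent F' ![v, w] := by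
  rw [LinearIndependent.pair_iff' hv]
  rintro c rfl
  exact h (mk_smul_eq hv (left_ne_zero_of_smul hw)).symm

variable [Module F V]

variable (F') in
def linearSet (W : Submodule F V) : Set (ℙ F' V) :=
  {P | ∃ v ∈ W, ∃ hv : v ≠ 0, mk F' v hv = P}

theorem mk_mem_linearSet_iff {W : Submodule F V} {v : V} (hv : v ≠ 0) :
    mk F' v hv ∈ linearSet F' W ↔ ∃ c : F', c ≠ 0 ∧ c • v ∈ W := by
  constructor
  · rintro ⟨w, hw, hw0, h⟩
    obtain ⟨c, rfl⟩ := (mk_eq_mk_iff' F' _ _ hw0 hv).1 h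
    exact ⟨c, left_ne_zero_of_smul hw0, hw⟩
  · rintro ⟨c, hc, hcv⟩
    exact ⟨_, hcv, smul_ne_zero hc hv, mk_smul_eq hv hc⟩

variable [Algebra F F'] [IsScalarTower F F' V]

theorem eq_span_pair_of_linearIndependent {W : Submodule F V} (hW : finrank F W = 2) {x y : V}
    (hx : x ∈ W) (hy : y ∈ W) (hxy : LinearIndependent F' ![x, y]) :
    W = span F {x, y} := by
  have : FiniteDimensional F W := Module.finite_of_finrank_eq_succ hW
  refine (eq_of_le_of_finrank_le (span_le.2 (Set.insert_subset hx (Set.singleton_subset_iff.2 hy)))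
    ?_).symm
  rw [hW, ← Matrix.range_cons_cons_empty, finrank_span_eq_card (hxy.restrict_scalars' F)]
  simp

theorem linearSet_span_smul_pair {x y : V} {c : F'} (hc : c ≠ 0) :
    linearSet F' (span F {c • x, c • y}) = linearSet F' (span F {x, y}) := by
  ext X
  induction X using Projectivization.ind with
  | h v hv =>
    simp only [mk_mem_linearSet_iff hv, mem_span_pair]
    constructor
    · rintro ⟨ν, hν, s, t, h⟩
      refine ⟨c⁻¹ * ν, mul_ne_zero (inv_ne_zero hc) hν, s, t, ?_⟩
      rw [mul_smul, ← h, smul_add, smul_comm c⁻¹ s, smul_comm c⁻¹ t, smul_smul, smul_smul,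
        inv_mul_cancel₀ hc, one_smul, one_smul]
    · rintro ⟨ν, hν, s, t, h⟩
      refine ⟨c * ν, mul_ne_zero hc hν, s, t, ?_⟩
      rw [mul_smul, ← h, smul_add, smul_comm c s, smul_comm c t]

theorem mk_add_smul_mem_linearSet {x y : V} {z : F'} (hz : z ∈ (algebraMap F F').range)
    (h : x + z • y ≠ 0) : mk F' (x + z • y) h ∈ linearSet F' (span F {x, y}) := by
  obtain ⟨a, rfl⟩ := hz
  exact ⟨_, by rw [algebraMap_smul]; exact mem_span_pair.2 ⟨1, a, by rw [one_smul]⟩, h, rfl⟩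

theorem exists_eq_mk_add_smul {x y : V} (hy : y ≠ 0) {X : ℙ F' V}
    (hX : X ∈ linearSet F' (span F {x, y})) (hXy : X ≠ mk F' y hy) :
    ∃ (a : F) (h : x + algebraMap F F' a • y ≠ 0), X = mk F' (x + algebraMap F F' a • y) h := by
  obtain ⟨v, hv, hv0, rfl⟩ := hX
  obtain ⟨s, t, rfl⟩ := mem_span_pair.1 hv
  have hs : s ≠ 0 := by
    rintro rfl
    refine hXy ((mk_eq_mk_iff' F' _ _ _ _).2 ⟨algebraMap F F' t, ?_⟩)
    rw [zero_smul, zero_add, algebraMap_smul]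
  have hv : s • x + t • y = algebraMap F F' s • (x + algebraMap F F' (t / s) • y) := by
    rw [smul_add, smul_smul, ← map_mul, mul_div_cancel₀ _ hs, algebraMap_smul, algebraMap_smul]
  exact ⟨t / s, fun h => hv0 (by rw [hv, h, smul_zero]),
    (mk_eq_mk_iff' F' _ _ _ _).2 ⟨_, hv.symm⟩⟩

theorem exists_linearSet_eq_span_pair_smul {W : Submodule F V} (hW : finrank F W = 2) {p q : V}
    (hpq : LinearIndependent F' ![p, q]) {hp : p ≠ 0} {hq : q ≠ 0}
    (hpW : mk F' p hp ∈ linearSet F' W) (hqW : mk F' q hq ∈ linearSet F' W) :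
    ∃ α : F', α ≠ 0 ∧ linearSet F' W = linearSet F' (span F {p, α • q}) := by
  obtain ⟨ρ, hρ, hρp⟩ := (mk_mem_linearSet_iff hp).1 hpW
  obtain ⟨σ, hσ, hσq⟩ := (mk_mem_linearSet_iff hq).1 hqW
  refine ⟨σ / ρ, div_ne_zero hσ hρ, ?_⟩
  rw [eq_span_pair_of_linearIndependent hW hρp hσq
    ((LinearIndependent.pair_smul_smul_iff hρ.isUnit hσ.isUnit).2 hpq),
    ← linearSet_span_smul_pair (x := p) hρ, smul_smul, mul_div_cancel₀ _ hρ]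

theorem linearIndependent_smul_add_smul_pair {p q : V} (hpq : LinearIndependent F' ![p, q])
    {ν₁ ν₂ z₁ z₂ : F'} (hν₁ : ν₁ ≠ 0) (hν₂ : ν₂ ≠ 0) (h₁₂ : z₁ ≠ z₂) :
    LinearIndependent F' ![ν₁ • (p + z₁ • q), ν₂ • (p + z₂ • q)] := by
  rw [LinearIndependent.pair_smul_smul_iff hν₁.isUnit hν₂.isUnit]
  have := (LinearIndependent.pair_add_smul_add_smul_iff (R := F') (x := p) (y := q)
    (1 : F') z₁ 1 z₂).2 ⟨hpq, by rwa [one_mul, mul_one, ne_comm]⟩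
  rwa [one_smul] at this

theorem exists_sub_mul_eq_of_smul_add_smul_mem {p q : V} (hpq : LinearIndependent F' ![p, q])
    {ν₁ ν₂ ν z₁ z₂ z : F'} (hν : ν ≠ 0) (hz : z ≠ z₂)
    (h : ν • (p + z • q) ∈ span F {ν₁ • (p + z₁ • q), ν₂ • (p + z₂ • q)}) :
    ∃ t : F, (z - z₁) * ν₁ = algebraMap F F' t * ((z - z₂) * ν₂) := by
  obtain ⟨e, f, hef⟩ := mem_span_pair.1 h
  rw [← algebraMap_smul F' e, ← algebraMap_smul F' f] at hef
  obtain ⟨hp, hq⟩ := hpq.eq_of_pair (s := algebraMap F F' e * ν₁ + algebraMap F F' f * ν₂)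
    (t := algebraMap F F' e * ν₁ * z₁ + algebraMap F F' f * ν₂ * z₂) (s' := ν) (t' := ν * z)
    (by linear_combination (norm := module) hef)
  have he : algebraMap F F' e ≠ 0 := by
    intro he
    have : ν * (z - z₂) = 0 := by linear_combination z₂ * hp - hq + (ν₁ * (z₁ - z₂)) * he
    exact mul_ne_zero hν (sub_ne_zero.2 hz) this
  refine ⟨-f / e, ?_⟩
  rw [map_div₀, map_neg]
  field_simp
  linear_combination z * hp - hq

theorem crossRatio_mem_range_of_mem_linearSet {W : Submodule F V} (hW : finrank F W = 2)
    {p q : V} (hpq : LinearIndependent F' ![p, q]) {z₁ z₂ z₃ z₄ : F'}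
    (h₁₂ : z₁ ≠ z₂) (h₃₂ : z₃ ≠ z₂) (h₄₁ : z₄ ≠ z₁)
    (hz : ∀ z ∈ ({z₁, z₂, z₃, z₄} : Set F'),
      ∃ h : p + z • q ≠ 0, mk F' (p + z • q) h ∈ linearSet F' W) :
    crossRatio z₁ z₂ z₃ z₄ ∈ (algebraMap F F').range := by
  have hν (z) (hz' : z ∈ ({z₁, z₂, z₃, z₄} : Set F')) : ∃ ν : F', ν ≠ 0 ∧ ν • (p + z • q) ∈ W :=
    let ⟨h, hmem⟩ := hz z hz'
    (mk_mem_linearSet_iff h).1 hmem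
  obtain ⟨ν₁, hν₁, hr⟩ := hν z₁ (by simp)
  obtain ⟨ν₂, hν₂, hs⟩ := hν z₂ (by simp)
  obtain ⟨ν₃, hν₃, ht⟩ := hν z₃ (by simp)
  obtain ⟨ν₄, hν₄, hu⟩ := hν z₄ (by simp)
  rw [eq_span_pair_of_linearIndependent hW hr hs
    (linearIndependent_smul_add_smul_pair hpq hν₁ hν₂ h₁₂)] at ht hu
  rw [Set.pair_comm] at hu
  obtain ⟨t₃, h₃⟩ := exists_sub_mul_eq_of_smul_add_smul_mem hpq hν₃ h₃₂ ht
  obtain ⟨t₄, h₄⟩ := exists_sub_mul_eq_of_smul_add_smul_mem hpq hν₄ h₄₁ hu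
  refine ⟨t₃ * t₄, ?_⟩
  rw [crossRatio, eq_div_iff (mul_ne_zero (sub_ne_zero.2 h₃₂) (sub_ne_zero.2 h₄₁))]
  refine mul_left_cancel₀ (mul_ne_zero hν₁ hν₂) ?_
  calc ν₁ * ν₂ * (algebraMap F F' (t₃ * t₄) * ((z₃ - z₂) * (z₄ - z₁)))
      = algebraMap F F' t₃ * ((z₃ - z₂) * ν₂) * (algebraMap F F' t₄ * ((z₄ - z₁) * ν₁)) := by
        rw [map_mul]; ring
    _ = (z₃ - z₁) * ν₁ * ((z₄ - z₂) * ν₂) := by rw [h₃, h₄]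
    _ = ν₁ * ν₂ * ((z₃ - z₁) * (z₄ - z₂)) := by ring

theorem even_finrank_of_linearSets {W₁ W₂ W₃ : Submodule F V} (hW₁ : finrank F W₁ = 2)
    (hW₂ : finrank F W₂ = 2) (hW₃ : finrank F W₃ = 2) {P Q R S T U : ℙ F' V}
    (hPQ : P ≠ Q) (hRS : R ≠ S) (hTU : T ≠ U)
    (hP : P ∈ linearSet F' W₁ ∩ linearSet F' W₂) (hQ : Q ∈ linearSet F' W₁ ∩ linearSet F' W₂)
    (hR : R ∈ (linearSet F' W₁ ∩ linearSet F' W₃) \ linearSet F' W₂)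
    (hS : S ∈ (linearSet F' W₁ ∩ linearSet F' W₃) \ linearSet F' W₂)
    (hT : T ∈ (linearSet F' W₂ ∩ linearSet F' W₃) \ linearSet F' W₁)
    (hU : U ∈ (linearSet F' W₂ ∩ linearSet F' W₃) \ linearSet F' W₁) :
    Even (finrank F F') := by
  obtain ⟨⟨p, hpW₁, hp, rfl⟩, hP₂⟩ := hP
  obtain ⟨q, hqW₁, hq, rfl⟩ := hQ.1
  have hpq := linearIndependent_of_mk_ne hPQ
  obtain ⟨α, hα, hW₂α⟩ := exists_linearSet_eq_span_pair_smul hW₂ hpq hP₂ hQ.2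
  obtain rfl := eq_span_pair_of_linearIndependent hW₁ hpW₁ hqW₁ hpq
  rw [hW₂α] at hT hU
  have hαq : mk F' (α • q) (smul_ne_zero hα hq) = mk F' q hq := mk_smul_eq hq hα
  obtain ⟨a, _, rfl⟩ := exists_eq_mk_add_smul hq hR.1.1 (by rintro rfl; exact hR.2 hQ.2)
  obtain ⟨b, _, rfl⟩ := exists_eq_mk_add_smul hq hS.1.1 (by rintro rfl; exact hS.2 hQ.2)
  obtain ⟨c, _, rfl⟩ := exists_eq_mk_add_smul _ hT.1.1 (by rw [hαq]; rintro rfl; exact hT.2 hQ.1)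
  obtain ⟨d, _, rfl⟩ := exists_eq_mk_add_smul _ hU.1.1 (by rw [hαq]; rintro rfl; exact hU.2 hQ.1)
  simp only [smul_smul] at hT hU hTU
  have hab : a ≠ b := by rintro rfl; exact hRS rfl
  have hcd : c ≠ d := by rintro rfl; exact hTU rfl
  have hcα : algebraMap F F' c * α ∉ (algebraMap F F').range :=
    fun h => hT.2 (mk_add_smul_mem_linearSet h _)
  have hdα : algebraMap F F' d * α ∉ (algebraMap F F').range :=
    fun h => hU.2 (mk_add_smul_mem_linearSet h _)
  refine even_finrank_of_crossRatio_mem_range hab hcd hcα hdα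
    (crossRatio_mem_range_of_mem_linearSet hW₃ hpq ((algebraMap F F').injective.ne hab)
      (fun h => hcα ⟨b, h.symm⟩) (fun h => hdα ⟨a, h.symm⟩) ?_)
  simp only [Set.mem_insert_iff, Set.mem_singleton_iff]
  rintro z (rfl | rfl | rfl | rfl)
  exacts [⟨_, hR.1.2⟩, ⟨_, hS.1.2⟩, ⟨_, hT.1.2⟩, ⟨_, hU.1.2⟩]

theorem IsSubline.exists_linearSet {b : Set (ℙ F' (Fin 2 → F'))} (hb : IsSubline F F' b) :
    ∃ W : Submodule F (Fin 2 → F'), finrank F W = 2 ∧ b = linearSet F' W := by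
  obtain ⟨g, rfl⟩ := hb
  let L : (Fin 2 → F) →ₗ[F] (Fin 2 → F') :=
    (g.toLinearMap.restrictScalars F).comp (LinearMap.compLeft (Algebra.linearMap F F') (Fin 2))
  have hL : Function.Injective L :=
    g.injective.comp fun u w h => funext fun i => (algebraMap F F').injective (congrFun h i)
  refine ⟨LinearMap.range L, by rw [LinearMap.finrank_range_of_inj hL, finrank_fin_fun], ?_⟩
  ext P
  constructor
  · rintro ⟨v, hv, rfl⟩
    exact ⟨_, ⟨v, rfl⟩, hv, rfl⟩
  · rintro ⟨_, ⟨v, rfl⟩, hv, rfl⟩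
    exact ⟨v, hv, rfl⟩

end LinearSet

end HP

theorem stmt_13_general (F F' : Type*) [Field F] [Field F'] [Algebra F F']
    (m : ℕ) (hdeg : finrank F F' = m)
    (hex : ∃ b₁ b₂ b₃ : Set (Projectivization F' (Fin 2 → F')),
      IsSubline F F' b₁ ∧ IsSubline F F' b₂ ∧ IsSubline F F' b₃ ∧
      b₁ ≠ b₂ ∧ b₁ ≠ b₃ ∧ b₂ ≠ b₃ ∧
      (b₁ ∩ b₂).ncard = 2 ∧ (b₁ ∩ b₃).ncard = 2 ∧ (b₂ ∩ b₃).ncard = 2 ∧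
      b₁ ∩ b₂ ∩ b₃ = ∅) :
    Even m := by
  obtain ⟨b₁, b₂, b₃, hb₁, hb₂, hb₃, -, -, -, h₁₂, h₁₃, h₂₃, h₁₂₃⟩ := hex
  obtain ⟨W₁, hW₁, rfl⟩ := hb₁.exists_linearSet
  obtain ⟨W₂, hW₂, rfl⟩ := hb₂.exists_linearSet
  obtain ⟨W₃, hW₃, rfl⟩ := hb₃.exists_linearSet
  obtain ⟨P, Q, hPQ, hPQ₁₂⟩ := Set.ncard_eq_two.1 h₁₂
  obtain ⟨R, S, hRS, hRS₁₃⟩ := Set.ncard_eq_two.1 h₁₃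
  obtain ⟨T, U, hTU, hTU₂₃⟩ := Set.ncard_eq_two.1 h₂₃
  have hout := Set.eq_empty_iff_forall_notMem.1 h₁₂₃
  have hoff₂ (X) (hX : X ∈ linearSet F' W₁ ∩ linearSet F' W₃) :
      X ∈ (linearSet F' W₁ ∩ linearSet F' W₃) \ linearSet F' W₂ :=
    ⟨hX, fun h₂ => hout X ⟨⟨hX.1, h₂⟩, hX.2⟩⟩
  have hoff₁ (X) (hX : X ∈ linearSet F' W₂ ∩ linearSet F' W₃) :
      X ∈ (linearSet F' W₂ ∩ linearSet F' W₃) \ linearSet F' W₁ :=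
    ⟨hX, fun h₁ => hout X ⟨⟨h₁, hX.1⟩, hX.2⟩⟩
  subst hdeg
  exact even_finrank_of_linearSets hW₁ hW₂ hW₃ hPQ hRS hTU (by simp [hPQ₁₂]) (by simp [hPQ₁₂])
    (hoff₂ R (by simp [hRS₁₃])) (hoff₂ S (by simp [hRS₁₃])) (hoff₁ T (by simp [hTU₂₃]))
    (hoff₁ U (by simp [hTU₂₃]))

/-- only-if direction: for `m ≥ 1` and `q > 2`, if there exist three
distinct `F_q`-sublines of `PG(1,q^m)` pairwise intersecting in exactly two points but
with empty common intersection, then `m` is even. -/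
theorem stmt_13 (F F' : Type*) [Field F] [Fintype F] [Field F'] [Fintype F'] [Algebra F F']
    (m : ℕ) (hm : 1 ≤ m) (hdeg : finrank F F' = m) (hq : 2 < Fintype.card F)
    (hex : ∃ b₁ b₂ b₃ : Set (Projectivization F' (Fin 2 → F')),
      IsSubline F F' b₁ ∧ IsSubline F F' b₂ ∧ IsSubline F F' b₃ ∧
      b₁ ≠ b₂ ∧ b₁ ≠ b₃ ∧ b₂ ≠ b₃ ∧
      (b₁ ∩ b₂).ncard = 2 ∧ (b₁ ∩ b₃).ncard = 2 ∧ (b₂ ∩ b₃).ncard = 2 ∧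
      b₁ ∩ b₂ ∩ b₃ = ∅) :
    Even m :=
  stmt_13_general F F' m hdeg hex
end
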